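/- arXiv:2303.01959 — 9 statements merged into one kernel-verified Lean document; each statement's English description precedes it below -/
import Mathlib

section
/- Let P and P' be point clouds and k ≥ 0 an integer such that the number of group indices with differing sub-point clouds satisfies |{i ∈ Fin m : P_i ≠ P'_i}| ≤ k. Then for every label l, M_l(P) − k ≤ M_l(P') ≤ M_l(P) + k. -/
/-- The `i`-th sub-point cloud of a point cloud `P`: the points of `P` hashed to group `i`. -/
def subCloud {X : Type*} [DecidableEq X] (m : ℕ) (r : X → Fin m) (P : Finset X) (i : Fin m) :
    Finset X :=
  P.filter (fun e => r e = i)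

/-- The label frequency `M_l(P)`: number of nonempty sub-point clouds classified as `l` by `f`. -/
def labelFreq {X : Type*} [DecidableEq X] (m : ℕ) {c : ℕ} (r : X → Fin m)
    (f : Finset X → Fin c) (P : Finset X) (l : Fin c) : ℕ :=
  (Finset.univ.filter
    (fun i : Fin m => (subCloud m r P i).Nonempty ∧ f (subCloud m r P i) = l)).card

/-- The ensemble classifier: the smallest label maximizing the label frequency. -/
def ensemble {X : Type*} [DecidableEq X] (m : ℕ) {c : ℕ} [NeZero c]
    (r : X → Fin m) (f : Finset X → Fin c) (P : Finset X) : Fin c :=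
  (Finset.univ.filter
    (fun l : Fin c => ∀ l', labelFreq m r f P l' ≤ labelFreq m r f P l)).min'
    (by
      obtain ⟨b, _, hb⟩ := Finset.exists_max_image (Finset.univ : Finset (Fin c))
        (labelFreq m r f P) ⟨0, Finset.mem_univ 0⟩
      exact ⟨b, Finset.mem_filter.mpr ⟨Finset.mem_univ _, fun l' => hb l' (Finset.mem_univ _)⟩⟩)

/-- `Gap(P,y) = M_y(P) − max_{l ≠ y} (M_l(P) + 𝟙(y > l))`. -/
def gap {X : Type*} [DecidableEq X] (m : ℕ) {c : ℕ} (r : X → Fin m)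
    (f : Finset X → Fin c) (P : Finset X) (y : Fin c) : ℕ :=
  labelFreq m r f P y -
    (Finset.univ.filter (fun l : Fin c => l ≠ y)).sup
      (fun l => labelFreq m r f P l + if l < y then 1 else 0)

/-- The perturbation size `d(P,P') = max(|P|,|P'|) − |P ∩ P'|`. -/
def pertSize {X : Type*} [DecidableEq X] (P P' : Finset X) : ℕ :=
  max P.card P'.card - (P ∩ P').card

/-- if at most `k` sub-point clouds differ between `P` and `P'`, then every
label frequency satisfies `M_l(P) − k ≤ M_l(P') ≤ M_l(P) + k`. -/
theorem labelFreq_stable_of_few_differing {X : Type*} [DecidableEq X] (m : ℕ) (hm : 1 ≤ m)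
    {c : ℕ} (hc : 1 ≤ c) (r : X → Fin m) (f : Finset X → Fin c) (P P' : Finset X) (k : ℕ)
    (h : (Finset.univ.filter
        (fun i : Fin m => subCloud m r P i ≠ subCloud m r P' i)).card ≤ k) :
    ∀ l : Fin c,
      (labelFreq m r f P l : ℤ) - k ≤ (labelFreq m r f P' l : ℤ) ∧
      (labelFreq m r f P' l : ℤ) ≤ (labelFreq m r f P l : ℤ) + k := by
  intro l
  set D := Finset.univ.filter
      (fun i : Fin m => subCloud m r P i ≠ subCloud m r P' i) with hD
  set A := Finset.univ.filter
      (fun i : Fin m => (subCloud m r P i).Nonempty ∧ f (subCloud m r P i) = l) with hA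
  set B := Finset.univ.filter
      (fun i : Fin m => (subCloud m r P' i).Nonempty ∧ f (subCloud m r P' i) = l) with hB
  have hAB : A \ B ⊆ D := by
    intro i hi
    simp only [hA, hB, hD, Finset.mem_sdiff, Finset.mem_filter, Finset.mem_univ,
      true_and] at hi ⊢
    intro heq
    exact hi.2 (heq ▸ hi.1)
  have hBA : B \ A ⊆ D := by
    intro i hi
    simp only [hA, hB, hD, Finset.mem_sdiff, Finset.mem_filter, Finset.mem_univ,
      true_and] at hi ⊢
    intro heq
    exact hi.2 (heq ▸ hi.1)
  have h1 : A.card ≤ B.card + k := by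
    calc A.card ≤ (A \ B).card + B.card := Finset.card_le_card_sdiff_add_card
    _ ≤ k + B.card := by
        have := le_trans (Finset.card_le_card hAB) h
        omega
    _ = B.card + k := by omega
  have h2 : B.card ≤ A.card + k := by
    calc B.card ≤ (B \ A).card + A.card := Finset.card_le_card_sdiff_add_card
    _ ≤ k + A.card := by
        have := le_trans (Finset.card_le_card hBA) h
        omega
    _ = A.card + k := by omega
  have heA : labelFreq m r f P l = A.card := rfl
  have heB : labelFreq m r f P' l = B.card := rfl
  rw [heA, heB]
  omega
end

section
/- Let P and P' be point clouds with perturbation size d(P,P') ≤ t. Then for every label l, |M_l(P') − M_l(P)| ≤ 2t; that is, the label frequency of every label changes by at most 2t under an arbitrary point perturbation of at most t points. -/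
/-- if `d(P,P') ≤ t`, then every label frequency changes by at most `2t`:
`|M_l(P') − M_l(P)| ≤ 2t`. -/
theorem labelFreq_stable_of_pertSize_le {X : Type*} [DecidableEq X] (m : ℕ) (hm : 1 ≤ m)
    {c : ℕ} (hc : 1 ≤ c) (r : X → Fin m) (f : Finset X → Fin c) (P P' : Finset X) (t : ℕ)
    (h : pertSize P P' ≤ t) :
    ∀ l : Fin c, |(labelFreq m r f P' l : ℤ) - (labelFreq m r f P l : ℤ)| ≤ 2 * t := by
  intro l
  classical
  set S : Finset (Fin m) := Finset.univ.filter
    (fun i : Fin m => (subCloud m r P i).Nonempty ∧ f (subCloud m r P i) = l) with hS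
  set S' : Finset (Fin m) := Finset.univ.filter
    (fun i : Fin m => (subCloud m r P' i).Nonempty ∧ f (subCloud m r P' i) = l) with hS'
  set D : Finset (Fin m) := ((P \ P') ∪ (P' \ P)).image r with hD
  -- any index where the subclouds differ lies in D
  have key : ∀ i : Fin m, subCloud m r P i ≠ subCloud m r P' i → i ∈ D := by
    intro i hne
    rw [Ne, Finset.ext_iff] at hne
    push_neg at hne
    obtain ⟨e, he⟩ := hne
    rcases he with ⟨h1, h2⟩ | ⟨h1, h2⟩ <;>
      simp only [subCloud, Finset.mem_filter, not_and] at h1 h2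
    · exact Finset.mem_image.mpr ⟨e, Finset.mem_union_left _
        (Finset.mem_sdiff.mpr ⟨h1.1, fun hh => h2 hh h1.2⟩), h1.2⟩
    · exact Finset.mem_image.mpr ⟨e, Finset.mem_union_right _
        (Finset.mem_sdiff.mpr ⟨h2.1, fun hh => h1 hh h2.2⟩), h2.2⟩
  have hSD : S \ S' ⊆ D := by
    intro i hi
    rw [Finset.mem_sdiff] at hi
    refine key i fun hEq => ?_
    rcases hi with ⟨hi1, hi2⟩
    rw [hS, Finset.mem_filter] at hi1
    exact hi2 (by rw [hS', Finset.mem_filter]; exact ⟨Finset.mem_univ _, hEq ▸ hi1.2⟩)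
  have hS'D : S' \ S ⊆ D := by
    intro i hi
    rw [Finset.mem_sdiff] at hi
    refine key i fun hEq => ?_
    rcases hi with ⟨hi1, hi2⟩
    rw [hS', Finset.mem_filter] at hi1
    exact hi2 (by rw [hS, Finset.mem_filter]; exact ⟨Finset.mem_univ _, hEq ▸ hi1.2⟩)
  -- card bound on D
  have h1 : (P \ P').card ≤ t := by
    have := Finset.card_inter_add_card_sdiff P P'
    have h2 : (P \ P').card = P.card - (P ∩ P').card := by omega
    rw [h2]
    calc P.card - (P ∩ P').card ≤ max P.card P'.card - (P ∩ P').card :=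
          Nat.sub_le_sub_right (le_max_left _ _) _
      _ ≤ t := h
  have h2 : (P' \ P).card ≤ t := by
    have := Finset.card_inter_add_card_sdiff P' P
    have h2 : (P' \ P).card = P'.card - (P ∩ P').card := by
      rw [Finset.inter_comm] at this; omega
    rw [h2]
    calc P'.card - (P ∩ P').card ≤ max P.card P'.card - (P ∩ P').card :=
          Nat.sub_le_sub_right (le_max_right _ _) _
      _ ≤ t := h
  have hDcard : D.card ≤ 2 * t := by
    calc D.card ≤ ((P \ P') ∪ (P' \ P)).card := Finset.card_image_le
      _ ≤ (P \ P').card + (P' \ P).card := Finset.card_union_le _ _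
      _ ≤ 2 * t := by omega
  have hb1 : S.card ≤ S'.card + D.card := by
    calc S.card ≤ (S \ S').card + S'.card := Finset.card_le_card_sdiff_add_card
      _ ≤ D.card + S'.card := by exact Nat.add_le_add_right (Finset.card_le_card hSD) _
      _ = S'.card + D.card := by omega
  have hb2 : S'.card ≤ S.card + D.card := by
    calc S'.card ≤ (S' \ S).card + S.card := Finset.card_le_card_sdiff_add_card
      _ ≤ D.card + S.card := by exact Nat.add_le_add_right (Finset.card_le_card hS'D) _
      _ = S.card + D.card := by omega
  have : labelFreq m r f P l = S.card := rfl
  have : labelFreq m r f P' l = S'.card := rfl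
  rw [abs_le]
  constructor <;> simp only [labelFreq, ← hS, ← hS'] <;> push_cast <;> omega
end

section
/- Let P and P' be point clouds such that either P ⊆ P' with |P' \ P| ≤ t (point addition attack) or P' ⊆ P with |P \ P'| ≤ t (point deletion attack). Then for every label l, |M_l(P') − M_l(P)| ≤ t; that is, the label frequency of every label changes by at most t when at most t points are added or at most t points are deleted. -/
lemma card_abs_le {ι : Type*} [DecidableEq ι] (A B D : Finset ι)
    (h1 : A \ B ⊆ D) (h2 : B \ A ⊆ D) :
    |(A.card : ℤ) - B.card| ≤ D.card := by
  have hA : A.card ≤ B.card + D.card := by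
    calc A.card ≤ (B ∪ D).card := Finset.card_le_card (by
      intro x hx
      by_cases hxB : x ∈ B
      · exact Finset.mem_union_left _ hxB
      · exact Finset.mem_union_right _ (h1 (Finset.mem_sdiff.mpr ⟨hx, hxB⟩)))
    _ ≤ B.card + D.card := Finset.card_union_le _ _
  have hB : B.card ≤ A.card + D.card := by
    calc B.card ≤ (A ∪ D).card := Finset.card_le_card (by
      intro x hx
      by_cases hxA : x ∈ A
      · exact Finset.mem_union_left _ hxA
      · exact Finset.mem_union_right _ (h2 (Finset.mem_sdiff.mpr ⟨hx, hxA⟩)))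
    _ ≤ A.card + D.card := Finset.card_union_le _ _
  rw [abs_sub_le_iff]
  constructor <;> [skip; skip] <;> omega

lemma labelFreq_sub_le {X : Type*} [DecidableEq X] (m : ℕ) {c : ℕ} (r : X → Fin m)
    (f : Finset X → Fin c) (P P' : Finset X) (hsub : P ⊆ P') (l : Fin c) :
    |(labelFreq m r f P' l : ℤ) - (labelFreq m r f P l : ℤ)| ≤ (P' \ P).card := by
  set D := (P' \ P).image r with hD
  have hkey : ∀ i : Fin m, i ∉ D → subCloud m r P i = subCloud m r P' i := by
    intro i hi
    apply Finset.Subset.antisymm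
    · exact Finset.filter_subset_filter _ hsub
    · intro x hx
      rw [subCloud, Finset.mem_filter] at hx ⊢
      refine ⟨?_, hx.2⟩
      by_contra hxP
      exact hi (Finset.mem_image.mpr ⟨x, Finset.mem_sdiff.mpr ⟨hx.1, hxP⟩, hx.2⟩)
  have hcard : D.card ≤ (P' \ P).card := Finset.card_image_le
  set A := Finset.univ.filter
    (fun i : Fin m => (subCloud m r P' i).Nonempty ∧ f (subCloud m r P' i) = l)
  set B := Finset.univ.filter
    (fun i : Fin m => (subCloud m r P i).Nonempty ∧ f (subCloud m r P i) = l)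
  have h1 : A \ B ⊆ D := by
    intro i hi
    by_contra hiD
    rw [Finset.mem_sdiff, Finset.mem_filter, Finset.mem_filter] at hi
    exact hi.2 ⟨Finset.mem_univ _, hkey i hiD ▸ hi.1.2⟩
  have h2 : B \ A ⊆ D := by
    intro i hi
    by_contra hiD
    rw [Finset.mem_sdiff, Finset.mem_filter, Finset.mem_filter] at hi
    exact hi.2 ⟨Finset.mem_univ _, (hkey i hiD).symm ▸ hi.1.2⟩
  calc |(labelFreq m r f P' l : ℤ) - (labelFreq m r f P l : ℤ)|
      ≤ (D.card : ℤ) := card_abs_le A B D h1 h2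
    _ ≤ ((P' \ P).card : ℤ) := by exact_mod_cast hcard

/-- if `P'` is obtained from `P` by adding at most `t` points or by deleting
at most `t` points, then every label frequency changes by at most `t`:
`|M_l(P') − M_l(P)| ≤ t`. -/
theorem labelFreq_stable_of_add_or_delete {X : Type*} [DecidableEq X] (m : ℕ) (hm : 1 ≤ m)
    {c : ℕ} (hc : 1 ≤ c) (r : X → Fin m) (f : Finset X → Fin c) (P P' : Finset X) (t : ℕ)
    (h : (P ⊆ P' ∧ (P' \ P).card ≤ t) ∨ (P' ⊆ P ∧ (P \ P').card ≤ t)) :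
    ∀ l : Fin c, |(labelFreq m r f P' l : ℤ) - (labelFreq m r f P l : ℤ)| ≤ t := by
  intro l
  rcases h with ⟨hsub, ht⟩ | ⟨hsub, ht⟩
  · exact le_trans (labelFreq_sub_le m r f P P' hsub l) (by exact_mod_cast ht)
  · have := labelFreq_sub_le m r f P' P hsub l
    rw [abs_sub_comm] at this
    exact le_trans this (by exact_mod_cast ht)
end

section
/- Let P and P' be point clouds, y a label, and k ≥ 0 an integer. If M_y(P) ≥ M_l(P) + 𝟙(y>l) + 2k for every label l ≠ y, and the number of differing sub-point clouds satisfies |{i ∈ Fin m : P_i ≠ P'_i}| ≤ k, then the ensemble classifier predicts h(P') = y. -/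

lemma freq_diff_le {X : Type*} [DecidableEq X] (m : ℕ) {c : ℕ} (r : X → Fin m)
    (f : Finset X → Fin c) (P P' : Finset X) (l : Fin c) :
    labelFreq m r f P' l ≤ labelFreq m r f P l +
      (Finset.univ.filter
        (fun i : Fin m => subCloud m r P i ≠ subCloud m r P' i)).card := by
  refine le_trans (Finset.card_le_card ?_) (Finset.card_union_le _ _)
  intro i hi
  simp only [Finset.mem_filter, Finset.mem_union, Finset.mem_univ, true_and] at *
  by_cases h : subCloud m r P i = subCloud m r P' i
  · left; rw [h]; exact hi
  · right; exact h

/-- if `M_y(P) ≥ M_l(P) + 𝟙(y > l) + 2k` for every `l ≠ y` and at most `k`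
sub-point clouds differ between `P` and `P'`, then `h(P') = y`. -/
theorem ensemble_eq_of_gap_and_few_differing {X : Type*} [DecidableEq X] (m : ℕ) (hm : 1 ≤ m)
    {c : ℕ} [NeZero c] (r : X → Fin m) (f : Finset X → Fin c) (P P' : Finset X)
    (y : Fin c) (k : ℕ)
    (hgap : ∀ l : Fin c, l ≠ y →
      labelFreq m r f P l + (if l < y then 1 else 0) + 2 * k ≤ labelFreq m r f P y)
    (hdiff : (Finset.univ.filter
        (fun i : Fin m => subCloud m r P i ≠ subCloud m r P' i)).card ≤ k) :
    ensemble m r f P' = y := by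
  set D := (Finset.univ.filter
      (fun i : Fin m => subCloud m r P i ≠ subCloud m r P' i)) with hD
  have hDsym : (Finset.univ.filter
      (fun i : Fin m => subCloud m r P' i ≠ subCloud m r P i)) = D := by
    rw [hD]; congr 1; ext i; exact ne_comm
  have h1 : ∀ l : Fin c, labelFreq m r f P' l ≤ labelFreq m r f P l + k := by
    intro l
    have := freq_diff_le m r f P P' l
    rw [← hD] at this
    omega
  have h2 : ∀ l : Fin c, labelFreq m r f P l ≤ labelFreq m r f P' l + k := by
    intro l
    have := freq_diff_le m r f P' P l
    rw [hDsym] at this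
    omega
  have key : ∀ l : Fin c, l ≠ y →
      labelFreq m r f P' l + (if l < y then 1 else 0) ≤ labelFreq m r f P' y := by
    intro l hl
    have := hgap l hl
    have := h1 l
    have := h2 y
    omega
  have hymax : ∀ l' : Fin c, labelFreq m r f P' l' ≤ labelFreq m r f P' y := by
    intro l'
    by_cases hl : l' = y
    · rw [hl]
    · have := key l' hl; split at this <;> omega
  have hymem : y ∈ Finset.univ.filter
      (fun l : Fin c => ∀ l', labelFreq m r f P' l' ≤ labelFreq m r f P' l) :=
    Finset.mem_filter.mpr ⟨Finset.mem_univ _, hymax⟩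
  apply le_antisymm (Finset.min'_le _ _ hymem)
  apply Finset.le_min'
  intro l hl
  by_contra hlt
  push_neg at hlt
  have hne : l ≠ y := ne_of_lt hlt
  have := key l hne
  rw [if_pos hlt] at this
  have := (Finset.mem_filter.mp hl).2 y
  omega
end

section
/- (Certified perturbation size against point addition attacks.) Suppose c ≥ 2 and the ensemble classifier predicts h(P) = y for a point cloud P. Let t(P) = ⌊Gap(P,y)/2⌋. Then for every point cloud P' with P ⊆ P' and |P' \ P| ≤ t(P) (i.e., P' is obtained from P by adding at most t(P) arbitrary points), the ensemble classifier predicts h(P') = y. -/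
/-- certified perturbation size against point addition attacks.
If `h(P) = y` and `t(P) = ⌊Gap(P,y)/2⌋`, then `h(P') = y` for every `P'` obtained from `P`
by adding at most `t(P)` arbitrary points. -/
theorem certified_addition {X : Type*} [DecidableEq X] (m : ℕ) (hm : 1 ≤ m)
    {c : ℕ} [NeZero c] (hc : 2 ≤ c) (r : X → Fin m) (f : Finset X → Fin c)
    (P : Finset X) (y : Fin c) (hy : ensemble m r f P = y) :
    ∀ P' : Finset X, P ⊆ P' → (P' \ P).card ≤ gap m r f P y / 2 →
      ensemble m r f P' = y := by
  intro P' hsub hle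
  by_cases hk0 : (P' \ P).card = 0
  · have : P' \ P = ∅ := Finset.card_eq_zero.mp hk0
    have hPP : P' = P :=
      Finset.Subset.antisymm (Finset.sdiff_eq_empty_iff_subset.mp this) hsub
    rw [hPP]; exact hy
  · set k := (P' \ P).card with hk
    set S := labelFreq m r f P
    set S' := labelFreq m r f P'
    set sup := (Finset.univ.filter (fun l : Fin c => l ≠ y)).sup
      (fun l => S l + if l < y then 1 else 0) with hsup
    -- from the gap condition
    have hkmul : k * 2 ≤ gap m r f P y :=
      (Nat.le_div_iff_mul_le (by norm_num)).mp hle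
    have hgap : sup + 2 * k ≤ S y := by
      have : gap m r f P y = S y - sup := rfl
      omega
    -- set of changed groups
    set T := (P' \ P).image r with hT
    have hTcard : T.card ≤ k := Finset.card_image_le
    have hsame : ∀ i : Fin m, i ∉ T → subCloud m r P' i = subCloud m r P i := by
      intro i hi
      ext e
      simp only [subCloud, Finset.mem_filter]
      constructor
      · rintro ⟨he, hre⟩
        refine ⟨?_, hre⟩
        by_contra heP
        exact hi (Finset.mem_image.mpr ⟨e, Finset.mem_sdiff.mpr ⟨he, heP⟩, hre⟩)
      · rintro ⟨he, hre⟩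
        exact ⟨hsub he, hre⟩
    -- the counting sets
    have hA : ∀ (Q : Finset X) (l : Fin c), labelFreq m r f Q l =
        (Finset.univ.filter (fun i : Fin m =>
          (subCloud m r Q i).Nonempty ∧ f (subCloud m r Q i) = l)).card :=
      fun _ _ => rfl
    have hup : ∀ l : Fin c, S' l ≤ S l + k := by
      intro l
      have hss : (Finset.univ.filter (fun i : Fin m =>
          (subCloud m r P' i).Nonempty ∧ f (subCloud m r P' i) = l)) ⊆
          (Finset.univ.filter (fun i : Fin m =>
          (subCloud m r P i).Nonempty ∧ f (subCloud m r P i) = l)) ∪ T := by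
        intro i hi
        by_cases hiT : i ∈ T
        · exact Finset.mem_union_right _ hiT
        · rw [Finset.mem_filter] at hi
          rw [hsame i hiT] at hi
          exact Finset.mem_union_left _ (Finset.mem_filter.mpr hi)
      calc S' l ≤ ((Finset.univ.filter (fun i : Fin m =>
            (subCloud m r P i).Nonempty ∧ f (subCloud m r P i) = l)) ∪ T).card :=
            Finset.card_le_card hss
        _ ≤ S l + T.card := Finset.card_union_le _ _
        _ ≤ S l + k := by omega
    have hdown : S y ≤ S' y + k := by
      have hss : (Finset.univ.filter (fun i : Fin m =>
          (subCloud m r P i).Nonempty ∧ f (subCloud m r P i) = y)) ⊆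
          (Finset.univ.filter (fun i : Fin m =>
          (subCloud m r P' i).Nonempty ∧ f (subCloud m r P' i) = y)) ∪ T := by
        intro i hi
        by_cases hiT : i ∈ T
        · exact Finset.mem_union_right _ hiT
        · rw [Finset.mem_filter] at hi
          rw [← hsame i hiT] at hi
          exact Finset.mem_union_left _ (Finset.mem_filter.mpr hi)
      calc S y ≤ ((Finset.univ.filter (fun i : Fin m =>
            (subCloud m r P' i).Nonempty ∧ f (subCloud m r P' i) = y)) ∪ T).card :=
            Finset.card_le_card hss
        _ ≤ S' y + T.card := Finset.card_union_le _ _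
        _ ≤ S' y + k := by omega
    -- key inequality for labels ≠ y
    have hkey : ∀ l : Fin c, l ≠ y → S' l + (if l < y then 1 else 0) ≤ S' y := by
      intro l hl
      have hls : S l + (if l < y then 1 else 0) ≤ sup :=
        Finset.le_sup (f := fun l => S l + if l < y then 1 else 0)
          (Finset.mem_filter.mpr ⟨Finset.mem_univ _, hl⟩)
      have h1 := hup l
      omega
    -- conclude about the ensemble on P'
    show (Finset.univ.filter
      (fun l : Fin c => ∀ l', labelFreq m r f P' l' ≤ labelFreq m r f P' l)).min' _ = y
    have hymem : y ∈ Finset.univ.filter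
        (fun l : Fin c => ∀ l', labelFreq m r f P' l' ≤ labelFreq m r f P' l) := by
      refine Finset.mem_filter.mpr ⟨Finset.mem_univ _, fun l' => ?_⟩
      show S' l' ≤ S' y
      by_cases h : l' = y
      · rw [h]
      · have := hkey l' h; omega
    apply le_antisymm (Finset.min'_le _ _ hymem)
    apply Finset.le_min'
    intro l hlmem
    rw [Finset.mem_filter] at hlmem
    by_contra hlt
    push_neg at hlt
    have hne : l ≠ y := ne_of_lt hlt
    have h1 := hkey l hne
    have h2 : S' y ≤ S' l := hlmem.2 y
    simp only [if_pos hlt] at h1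
    omega
end

section
/- (Certified perturbation size against point deletion attacks.) Suppose c ≥ 2 and the ensemble classifier predicts h(P) = y for a point cloud P. Let t(P) = ⌊Gap(P,y)/2⌋. Then for every point cloud P' with P' ⊆ P and |P \ P'| ≤ t(P) (i.e., P' is obtained from P by deleting at most t(P) points), the ensemble classifier predicts h(P') = y. -/
/-- label frequencies change by at most the number of changed sub-clouds. -/
lemma freq_le {X : Type*} [DecidableEq X] (m : ℕ) {c : ℕ} (r : X → Fin m)
    (f : Finset X → Fin c) (P P' : Finset X) (l : Fin c) :
    labelFreq m r f P l ≤ labelFreq m r f P' l +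
      (Finset.univ.filter (fun i : Fin m => subCloud m r P i ≠ subCloud m r P' i)).card := by
  classical
  have hsub : (Finset.univ.filter
      (fun i : Fin m => (subCloud m r P i).Nonempty ∧ f (subCloud m r P i) = l)) ⊆
      (Finset.univ.filter
        (fun i : Fin m => (subCloud m r P' i).Nonempty ∧ f (subCloud m r P' i) = l)) ∪
      (Finset.univ.filter (fun i : Fin m => subCloud m r P i ≠ subCloud m r P' i)) := by
    intro i hi
    simp only [Finset.mem_filter, Finset.mem_univ, true_and] at hi
    by_cases h : subCloud m r P i = subCloud m r P' i
    · exact Finset.mem_union_left _ (by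
        simp only [Finset.mem_filter, Finset.mem_univ, true_and]
        rw [← h]; exact hi)
    · exact Finset.mem_union_right _ (by simp [h])
  calc labelFreq m r f P l ≤ _ := Finset.card_le_card hsub
    _ ≤ _ := Finset.card_union_le _ _

lemma changed_le {X : Type*} [DecidableEq X] (m : ℕ) (r : X → Fin m)
    (P P' : Finset X) (hsub : P' ⊆ P) :
    (Finset.univ.filter (fun i : Fin m => subCloud m r P i ≠ subCloud m r P' i)).card ≤
      (P \ P').card := by
  classical
  have h : (Finset.univ.filter (fun i : Fin m => subCloud m r P i ≠ subCloud m r P' i)) ⊆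
      (P \ P').image r := by
    intro i hi
    simp only [Finset.mem_filter, Finset.mem_univ, true_and] at hi
    have hss : subCloud m r P' i ⊆ subCloud m r P i :=
      Finset.filter_subset_filter _ hsub
    obtain ⟨e, heP, heP'⟩ := Finset.exists_of_ssubset (lt_of_le_of_ne hss (Ne.symm hi))
    simp only [subCloud, Finset.mem_filter] at heP heP'
    have : e ∉ P' := fun h' => heP' ⟨h', heP.2⟩
    exact Finset.mem_image.mpr ⟨e, Finset.mem_sdiff.mpr ⟨heP.1, this⟩, heP.2⟩
  exact (Finset.card_le_card h).trans (Finset.card_image_le)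

/-- certified perturbation size against point deletion attacks.
If `h(P) = y` and `t(P) = ⌊Gap(P,y)/2⌋`, then `h(P') = y` for every `P'` obtained from `P`
by deleting at most `t(P)` points. -/
theorem certified_deletion {X : Type*} [DecidableEq X] (m : ℕ) (hm : 1 ≤ m)
    {c : ℕ} [NeZero c] (hc : 2 ≤ c) (r : X → Fin m) (f : Finset X → Fin c)
    (P : Finset X) (y : Fin c) (hy : ensemble m r f P = y) :
    ∀ P' : Finset X, P' ⊆ P → (P \ P').card ≤ gap m r f P y / 2 →
      ensemble m r f P' = y := by
  intro P' hsub hcard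
  by_cases hk0 : (P \ P').card = 0
  · have hempty : P \ P' = ∅ := Finset.card_eq_zero.mp hk0
    have hPP' : P' = P := by
      apply Finset.Subset.antisymm hsub
      intro x hx
      by_contra hx'
      have : x ∈ P \ P' := Finset.mem_sdiff.mpr ⟨hx, hx'⟩
      rw [hempty] at this
      exact absurd this (Finset.notMem_empty x)
    rw [hPP']; exact hy
  set k := (P \ P').card with hkdef
  set D := (Finset.univ.filter
    (fun i : Fin m => subCloud m r P i ≠ subCloud m r P' i)) with hD
  have hDk : D.card ≤ k := changed_le m r P P' hsub
  have hD' : (Finset.univ.filter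
      (fun i : Fin m => subCloud m r P' i ≠ subCloud m r P i)) = D := by
    rw [hD]; apply Finset.filter_congr; intro i _; simp [ne_comm]
  have hup : ∀ l, labelFreq m r f P' l ≤ labelFreq m r f P l + k := by
    intro l
    have := freq_le m r f P' P l
    rw [hD'] at this
    omega
  have hdown : labelFreq m r f P y ≤ labelFreq m r f P' y + k := by
    have := freq_le m r f P P' y
    rw [← hD] at this
    omega
  have hk1 : 1 ≤ k := Nat.one_le_iff_ne_zero.mpr hk0
  have hgap2 : 2 * k ≤ gap m r f P y := by
    have := Nat.div_mul_le_self (gap m r f P y) 2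
    omega
  set S := (Finset.univ.filter (fun l : Fin c => l ≠ y)).sup
      (fun l => labelFreq m r f P l + if l < y then 1 else 0) with hS
  have hMS : S + 2 * k ≤ labelFreq m r f P y := by
    have hgap : gap m r f P y = labelFreq m r f P y - S := rfl
    omega
  have hkey : ∀ l : Fin c, l ≠ y →
      labelFreq m r f P' l + (if l < y then 1 else 0) ≤ labelFreq m r f P' y := by
    intro l hl
    have hlS : labelFreq m r f P l + (if l < y then 1 else 0) ≤ S := by
      rw [hS]
      exact Finset.le_sup (f := fun l => labelFreq m r f P l + if l < y then 1 else 0)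
        (Finset.mem_filter.mpr ⟨Finset.mem_univ _, hl⟩)
    have h1 := hup l
    omega
  have hymem' : y ∈ (Finset.univ.filter
      (fun l : Fin c => ∀ l', labelFreq m r f P' l' ≤ labelFreq m r f P' l)) := by
    simp only [Finset.mem_filter, Finset.mem_univ, true_and]
    intro l'
    by_cases h : l' = y
    · rw [h]
    · have := hkey l' h; split_ifs at this <;> omega
  apply le_antisymm
  · exact Finset.min'_le _ _ hymem'
  · by_contra hlt
    push_neg at hlt
    have hwm : ∀ l', labelFreq m r f P' l' ≤ labelFreq m r f P' (ensemble m r f P') := by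
      have := Finset.mem_filter.mp (Finset.min'_mem (Finset.univ.filter
        (fun l : Fin c => ∀ l', labelFreq m r f P' l' ≤ labelFreq m r f P' l))
        ⟨y, hymem'⟩)
      exact this.2
    have hne : ensemble m r f P' ≠ y := ne_of_lt hlt
    have h1 := hkey _ hne
    rw [if_pos hlt] at h1
    have h2 := hwm y
    omega
end

section
/- (Theorem 2, tightness for point addition attacks.) Let P be a point cloud such that every sub-point cloud P_i (i ∈ Fin m) is nonempty, and assume that for every i ∈ Fin m there exists a point e ∉ P with r(e) = i. Suppose c ≥ 2, the ensemble classifier built from a base classifier f predicts h(P) = y, and let t(P) = ⌊Gap(P,y)/2⌋. Then there exist a base point cloud classifier f' whose label frequencies on P agree with those of f (M'_l(P) = M_l(P) for every label l) and a point cloud P' with P ⊆ P' and |P' \ P| = t(P) + 1, such that the ensemble classifier h' built from f' satisfies h'(P') ≠ h'(P). -/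
lemma min'_congr' {α : Type*} [LinearOrder α] (s s' : Finset α) (h : s = s') (h1 : s.Nonempty) :
    s.min' h1 = s'.min' (h ▸ h1) := by subst h; rfl

/-- Theorem 2, tightness for point addition attacks. -/
theorem tightness_addition {X : Type*} [DecidableEq X] (m : ℕ) (hm : 1 ≤ m)
    {c : ℕ} [NeZero c] (hc : 2 ≤ c) (r : X → Fin m) (f : Finset X → Fin c)
    (P : Finset X) (y : Fin c)
    (hne : ∀ i : Fin m, (subCloud m r P i).Nonempty)
    (hext : ∀ i : Fin m, ∃ e : X, e ∉ P ∧ r e = i)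
    (hy : ensemble m r f P = y) :
    ∃ (f' : Finset X → Fin c) (P' : Finset X),
      (∀ l : Fin c, labelFreq m r f' P l = labelFreq m r f P l) ∧
      P ⊆ P' ∧ (P' \ P).card = gap m r f P y / 2 + 1 ∧
      ensemble m r f' P' ≠ ensemble m r f' P := by
  classical
  set M : Fin c → ℕ := labelFreq m r f P with hMdef
  simp only [ensemble] at hy
  -- y is a maximizer
  have hymem : y ∈ Finset.univ.filter (fun l : Fin c => ∀ l', M l' ≤ M l) := by
    rw [← hy]; exact Finset.min'_mem _ _
  have hmax : ∀ l', M l' ≤ M y := (Finset.mem_filter.mp hymem).2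
  have hsmall : ∀ l, l < y → M l < M y := by
    intro l hl
    by_contra h
    push_neg at h
    have hlmem : l ∈ Finset.univ.filter (fun l : Fin c => ∀ l', M l' ≤ M l) :=
      Finset.mem_filter.mpr ⟨Finset.mem_univ _, fun l' => le_trans (hmax l') h⟩
    have hle := Finset.min'_le _ _ hlmem
    rw [hy] at hle
    exact absurd hl (not_lt.mpr hle)
  -- the set of labels ≠ y is nonempty
  have hSne : (Finset.univ.filter (fun l : Fin c => l ≠ y)).Nonempty := by
    have : ∃ l : Fin c, l ≠ y := by
      by_cases h : (y : ℕ) = 0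
      · exact ⟨⟨1, by omega⟩, fun he => by simp [Fin.ext_iff, h] at he⟩
      · exact ⟨⟨0, by omega⟩, fun he => by simp [Fin.ext_iff] at he; omega⟩
    rcases this with ⟨l, hl⟩
    exact ⟨l, Finset.mem_filter.mpr ⟨Finset.mem_univ _, hl⟩⟩
  obtain ⟨y', hy'mem, hy'sup⟩ := Finset.exists_mem_eq_sup _ hSne
      (fun l => M l + if l < y then 1 else 0)
  have hy'ne : y' ≠ y := (Finset.mem_filter.mp hy'mem).2
  set B : ℕ := M y' + if y' < y then 1 else 0 with hBdef
  have hBle : B ≤ M y := by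
    by_cases h : y' < y
    · simpa [hBdef, h] using hsmall y' h
    · simpa [hBdef, h] using hmax y'
  set g : ℕ := gap m r f P y with hgdef
  have hgeq : M y = B + g := by
    have h1 : g = M y - B := by rw [hgdef, gap, ← hMdef, hy'sup]
    omega
  set t : ℕ := g / 2 with htdef
  -- M y ≥ 1
  have hMy1 : 1 ≤ M y := by
    set i0 : Fin m := ⟨0, hm⟩
    have : i0 ∈ Finset.univ.filter
        (fun i : Fin m => (subCloud m r P i).Nonempty ∧ f (subCloud m r P i) = f (subCloud m r P i0)) :=
      Finset.mem_filter.mpr ⟨Finset.mem_univ _, hne i0, rfl⟩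
    calc 1 ≤ M (f (subCloud m r P i0)) := Finset.card_pos.mpr ⟨i0, this⟩
    _ ≤ M y := hmax _
  have htM : t + 1 ≤ M y := by
    have : g ≤ M y := by omega
    omega
  -- choose T
  set A : Finset (Fin m) := Finset.univ.filter
      (fun i => (subCloud m r P i).Nonempty ∧ f (subCloud m r P i) = y) with hAdef
  have hAcard : A.card = M y := rfl
  obtain ⟨T, hTA, hTcard⟩ : ∃ T ⊆ A, T.card = t + 1 :=
    Finset.exists_subset_card_eq (by omega)
  have hTf : ∀ i ∈ T, f (subCloud m r P i) = y := fun i hi =>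
    (Finset.mem_filter.mp (hTA hi)).2.2
  -- choose new points
  choose e heP her using hext
  set Q : Finset X := T.image e with hQdef
  set P' : Finset X := P ∪ Q with hP'def
  have hQnotP : ∀ x ∈ Q, x ∉ P := by
    intro x hx
    rcases Finset.mem_image.mp hx with ⟨j, _, rfl⟩
    exact heP j
  have hQcard : Q.card = t + 1 := by
    rw [hQdef, Finset.card_image_of_injOn, hTcard]
    intro a _ b _ hab
    have := her a
    rw [hab, her b] at this
    exact this.symm
  have hPP' : P ⊆ P' := Finset.subset_union_left
  have hdiff : P' \ P = Q := by
    ext x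
    simp only [hP'def, Finset.mem_sdiff, Finset.mem_union]
    constructor
    · rintro ⟨h1 | h1, h2⟩
      · exact absurd h1 h2
      · exact h1
    · intro h
      exact ⟨Or.inr h, hQnotP x h⟩
  -- sub-clouds of P'
  have hsubT : ∀ i ∈ T, subCloud m r P' i = insert (e i) (subCloud m r P i) := by
    intro i hi
    ext x
    simp only [subCloud, Finset.mem_filter, hP'def, Finset.mem_union, Finset.mem_insert,
      hQdef, Finset.mem_image]
    constructor
    · rintro ⟨hx | ⟨j, hj, rfl⟩, hrx⟩
      · exact Or.inr ⟨hx, hrx⟩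
      · left
        have hij : i = j := by rw [← hrx, her j]
        rw [hij]
    · rintro (rfl | ⟨hx, hrx⟩)
      · exact ⟨Or.inr ⟨i, hi, rfl⟩, her i⟩
      · exact ⟨Or.inl hx, hrx⟩
  have hsubN : ∀ i ∉ T, subCloud m r P' i = subCloud m r P i := by
    intro i hi
    ext x
    simp only [subCloud, Finset.mem_filter, hP'def, Finset.mem_union, hQdef, Finset.mem_image]
    constructor
    · rintro ⟨hx | ⟨j, hj, rfl⟩, hrx⟩
      · exact ⟨hx, hrx⟩
      · exfalso
        have hij : i = j := by rw [← hrx, her j]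
        exact hi (by rw [hij]; exact hj)
    · rintro ⟨hx, hrx⟩
      exact ⟨Or.inl hx, hrx⟩
  -- the tampered classifier
  set f' : Finset X → Fin c :=
    fun S => if ∃ i ∈ T, S = subCloud m r P' i then y' else f S with hf'def
  have hf'P : ∀ S : Finset X, S ⊆ P → f' S = f S := by
    intro S hS
    rw [hf'def]
    simp only
    rw [if_neg]
    rintro ⟨i, hi, rfl⟩
    have hei : e i ∈ subCloud m r P' i := by
      rw [hsubT i hi]; exact Finset.mem_insert_self _ _
    exact heP i (hS hei)
  have hsubP : ∀ i : Fin m, subCloud m r P i ⊆ P := by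
    intro i x hx
    exact Finset.mem_filter.mp hx |>.1
  have hfreqP : ∀ l : Fin c, labelFreq m r f' P l = labelFreq m r f P l := by
    intro l
    unfold labelFreq
    congr 1
    apply Finset.filter_congr
    intro i _
    rw [hf'P (subCloud m r P i) (hsubP i)]
  -- values of f' on sub-clouds of P'
  have hf'T : ∀ i ∈ T, f' (subCloud m r P' i) = y' := by
    intro i hi
    rw [hf'def]
    exact if_pos ⟨i, hi, rfl⟩
  have hf'N : ∀ i ∉ T, f' (subCloud m r P' i) = f (subCloud m r P i) := by
    intro i hi
    rw [hsubN i hi]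
    exact hf'P _ (hsubP i)
  have hneP' : ∀ i : Fin m, (subCloud m r P' i).Nonempty := by
    intro i
    by_cases hi : i ∈ T
    · rw [hsubT i hi]; exact Finset.insert_nonempty _ _
    · rw [hsubN i hi]; exact hne i
  set N : Fin c → ℕ := labelFreq m r f' P' with hNdef
  -- counting lemmas
  have hsplit : ∀ (p : Fin m → Prop) [DecidablePred p],
      (Finset.univ.filter p).card = (T.filter p).card + (Tᶜ.filter p).card := by
    intro p _
    rw [← Finset.union_compl T, Finset.filter_union,
      Finset.card_union_of_disjoint
        (Finset.disjoint_filter_filter disjoint_compl_right)]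
  have hNcount : ∀ l : Fin c, N l =
      (T.filter (fun i => f' (subCloud m r P' i) = l)).card +
      (Tᶜ.filter (fun i => f (subCloud m r P i) = l)).card := by
    intro l
    rw [hNdef]
    unfold labelFreq
    rw [Finset.filter_congr (q := fun i => f' (subCloud m r P' i) = l)
      (fun i _ => by simp [hneP' i]), hsplit]
    have hstep : Tᶜ.filter (fun i => f' (subCloud m r P' i) = l) =
        Tᶜ.filter (fun i => f (subCloud m r P i) = l) :=
      Finset.filter_congr (fun i hi => by
        simp only [hf'N i (Finset.mem_compl.mp hi)])
    rw [hstep]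
  have hMcount : ∀ l : Fin c, M l =
      (T.filter (fun i => f (subCloud m r P i) = l)).card +
      (Tᶜ.filter (fun i => f (subCloud m r P i) = l)).card := by
    intro l
    rw [hMdef]
    unfold labelFreq
    rw [Finset.filter_congr (q := fun i => f (subCloud m r P i) = l)
      (fun i _ => by simp [hne i]), hsplit]
  have hT1 : T.filter (fun i => f (subCloud m r P i) = y) = T :=
    Finset.filter_true_of_mem hTf
  have hT2 : T.filter (fun i => f' (subCloud m r P' i) = y) = ∅ :=
    Finset.filter_false_of_mem (fun i hi => by rw [hf'T i hi]; exact hy'ne)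
  have hT3 : T.filter (fun i => f' (subCloud m r P' i) = y') = T :=
    Finset.filter_true_of_mem (fun i hi => hf'T i hi)
  have hT4 : T.filter (fun i => f (subCloud m r P i) = y') = ∅ :=
    Finset.filter_false_of_mem (fun i hi => by
      rw [hTf i hi]; exact fun h => hy'ne h.symm)
  have hMyN : M y = (t + 1) + N y := by
    rw [hMcount y, hNcount y, hT1, hT2, hTcard]
    simp
  have hNy' : N y' = (t + 1) + M y' := by
    rw [hMcount y', hNcount y', hT3, hT4, hTcard]
    simp [Nat.add_comm]
  -- ensemble of f' on P equals y
  have hensP : ensemble m r f' P = y := by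
    simp only [ensemble]
    rw [min'_congr' _ (Finset.univ.filter (fun l : Fin c => ∀ l', M l' ≤ M l))
      (by apply Finset.filter_congr; intro l _; simp only [hfreqP, hMdef])]
    exact hy
  refine ⟨f', P', hfreqP, hPP', by rw [hdiff, hQcard], ?_⟩
  rw [hensP]
  intro h
  simp only [ensemble] at h
  have hymem' : y ∈ Finset.univ.filter (fun l : Fin c => ∀ l', N l' ≤ N l) := by
    rw [← h]; exact Finset.min'_mem _ _
  have hmaxN : ∀ l', N l' ≤ N y := (Finset.mem_filter.mp hymem').2
  have hkey := hmaxN y'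
  -- arithmetic: derive y' < y and N y' = N y
  have hind : (if y' < y then 1 else 0 : ℕ) ≤ 1 := by split <;> omega
  have hy'lt : y' < y := by
    by_contra hlt
    rw [if_neg hlt] at hBdef
    omega
  have hNeq : N y' = N y := by
    rw [if_pos hy'lt] at hBdef
    omega
  have hy'mem' : y' ∈ Finset.univ.filter (fun l : Fin c => ∀ l', N l' ≤ N l) :=
    Finset.mem_filter.mpr ⟨Finset.mem_univ _, fun l' => hNeq ▸ hmaxN l'⟩
  have hle := Finset.min'_le _ _ hy'mem'
  rw [h] at hle
  exact absurd hy'lt (not_lt.mpr hle)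
end

section
/- (Theorem 2, tightness for point deletion attacks.) Let P be a point cloud such that every sub-point cloud P_i (i ∈ Fin m) contains at least 2 points. Suppose c ≥ 2, the ensemble classifier built from a base classifier f predicts h(P) = y, and let t(P) = ⌊Gap(P,y)/2⌋. Then there exist a base point cloud classifier f' whose label frequencies on P agree with those of f (M'_l(P) = M_l(P) for every label l) and a point cloud P' with P' ⊆ P and |P \ P'| = t(P) + 1, such that the ensemble classifier h' built from f' satisfies h'(P') ≠ h'(P). -/
lemma ensemble_congr {X : Type*} [DecidableEq X] (m : ℕ) {c : ℕ} [NeZero c]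
    (r : X → Fin m) (f₁ f₂ : Finset X → Fin c) (P Q : Finset X)
    (h : ∀ l, labelFreq m r f₁ P l = labelFreq m r f₂ Q l) :
    ensemble m r f₁ P = ensemble m r f₂ Q := by
  unfold ensemble
  have hset : (Finset.univ.filter
      (fun l : Fin c => ∀ l', labelFreq m r f₁ P l' ≤ labelFreq m r f₁ P l)) =
      (Finset.univ.filter
      (fun l : Fin c => ∀ l', labelFreq m r f₂ Q l' ≤ labelFreq m r f₂ Q l)) := by
    apply Finset.filter_congr
    intro l _
    simp [h]
  congr 1

/-- Theorem 2, tightness for point deletion attacks. -/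
theorem tightness_deletion {X : Type*} [DecidableEq X] (m : ℕ) (hm : 1 ≤ m)
    {c : ℕ} [NeZero c] (hc : 2 ≤ c) (r : X → Fin m) (f : Finset X → Fin c)
    (P : Finset X) (y : Fin c)
    (hne : ∀ i : Fin m, 2 ≤ (subCloud m r P i).card)
    (hy : ensemble m r f P = y) :
    ∃ (f' : Finset X → Fin c) (P' : Finset X),
      (∀ l : Fin c, labelFreq m r f' P l = labelFreq m r f P l) ∧
      P' ⊆ P ∧ (P \ P').card = gap m r f P y / 2 + 1 ∧
      ensemble m r f' P' ≠ ensemble m r f' P := by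
  classical
  -- every subcloud is nonempty
  have hnonempty : ∀ i, (subCloud m r P i).Nonempty := fun i =>
    Finset.card_pos.mp (by have := hne i; omega)
  choose x hx using hnonempty
  have hxr : ∀ i, r (x i) = i := fun i => (Finset.mem_filter.mp (hx i)).2
  have hxP : ∀ i, x i ∈ P := fun i => (Finset.mem_filter.mp (hx i)).1
  set g := gap m r f P y with hg
  set k := g / 2 + 1 with hk
  -- labelFreq simplification (the nonemptiness is automatic)
  have hLF : ∀ (f'' : Finset X → Fin c) (Q : Finset X),
      (∀ i, (subCloud m r Q i).Nonempty) → ∀ l, labelFreq m r f'' Q l =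
      (Finset.univ.filter (fun i : Fin m => f'' (subCloud m r Q i) = l)).card := by
    intro f'' Q hQ l
    unfold labelFreq
    congr 1
    apply Finset.filter_congr
    intro i _
    simp [hQ i]
  -- y is a maximizer
  have hymem : y ∈ Finset.univ.filter
      (fun l : Fin c => ∀ l', labelFreq m r f P l' ≤ labelFreq m r f P l) := by
    rw [← hy]; exact Finset.min'_mem _ _
  have hymax : ∀ l', labelFreq m r f P l' ≤ labelFreq m r f P y :=
    (Finset.mem_filter.mp hymem).2
  -- M_y ≥ 1
  have hMy1 : 1 ≤ labelFreq m r f P y := by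
    set i0 : Fin m := ⟨0, hm⟩
    have h1 : 1 ≤ labelFreq m r f P (f (subCloud m r P i0)) := by
      rw [hLF f P (fun i => Finset.card_pos.mp (by have := hne i; omega))]
      apply Finset.card_pos.mpr
      exact ⟨i0, Finset.mem_filter.mpr ⟨Finset.mem_univ _, rfl⟩⟩
    exact le_trans h1 (hymax _)
  -- g ≤ M_y
  have hgMy : g ≤ labelFreq m r f P y := Nat.sub_le _ _
  have hkMy : k ≤ labelFreq m r f P y := by omega
  -- choose y' achieving the sup
  have hsetne : (Finset.univ.filter (fun l : Fin c => l ≠ y)).Nonempty := by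
    have hex : ∃ l : Fin c, l ≠ y := by
      by_cases h0 : y = ⟨0, by omega⟩
      · exact ⟨⟨1, by omega⟩, by rw [h0]; simp [Fin.ext_iff]⟩
      · exact ⟨⟨0, by omega⟩, fun h => h0 h.symm⟩
    rcases hex with ⟨l, hl⟩
    exact ⟨l, Finset.mem_filter.mpr ⟨Finset.mem_univ _, hl⟩⟩
  obtain ⟨y', hy'mem, hy'sup⟩ := Finset.exists_mem_eq_sup _ hsetne
    (fun l : Fin c => labelFreq m r f P l + if l < y then 1 else 0)
  have hy'ne : y' ≠ y := (Finset.mem_filter.mp hy'mem).2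
  -- key numeric inequality
  have hkey : labelFreq m r f P y + 1 ≤
      labelFreq m r f P y' + (if y' < y then 1 else 0) + 2 * k := by
    have h1 : labelFreq m r f P y ≤
        (labelFreq m r f P y' + if y' < y then 1 else 0) + g := by
      rw [hg]
      unfold gap
      rw [← hy'sup]
      omega
    omega
  -- choose T ⊆ Sy of size k
  set Sy := Finset.univ.filter (fun i : Fin m => f (subCloud m r P i) = y) with hSy
  have hne' : ∀ i, (subCloud m r P i).Nonempty := fun i => ⟨x i, hx i⟩
  have hSycard : labelFreq m r f P y = Sy.card := hLF f P hne' y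
  obtain ⟨T, hTsub, hTcard⟩ := Finset.exists_subset_card_eq (s := Sy) (n := k) (by omega)
  -- the perturbed point cloud
  set P' : Finset X := P \ T.image x with hP'
  have hsubP' : P' ⊆ P := Finset.sdiff_subset
  have himsub : T.image x ⊆ P := by
    intro e he
    obtain ⟨i, _, rfl⟩ := Finset.mem_image.mp he
    exact hxP i
  have hinjx : Set.InjOn x T := by
    intro a _ b _ hab
    have := hxr a
    rw [hab, hxr b] at this
    exact this.symm
  have hcardPP' : (P \ P').card = k := by
    rw [hP', Finset.sdiff_sdiff_self_left, Finset.inter_eq_right.mpr himsub,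
      Finset.card_image_of_injOn hinjx, hTcard]
  -- the adversarial set of sub-clouds
  set D : Finset (Finset X) := T.image (fun i => subCloud m r P i \ {x i}) with hD
  set f' : Finset X → Fin c := fun S => if S ∈ D then y' else f S with hf'
  -- original sub-clouds are not in D
  have hnotD : ∀ j, subCloud m r P j ∉ D := by
    intro j hj
    obtain ⟨i, hiT, hEq⟩ := Finset.mem_image.mp hj
    have hsdne : (subCloud m r P i \ {x i}).Nonempty := by
      rw [hEq]; exact hne' j
    obtain ⟨e, he⟩ := hsdne
    have hei : e ∈ subCloud m r P i := (Finset.mem_sdiff.mp he).1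
    have hej : e ∈ subCloud m r P j := hEq ▸ he
    have hij : i = j := by
      have h1 := (Finset.mem_filter.mp hei).2
      have h2 := (Finset.mem_filter.mp hej).2
      exact h1.symm.trans h2
    subst hij
    have : x i ∈ subCloud m r P i \ {x i} := by rw [hEq]; exact hx i
    simp at this
  have hf'eq : ∀ j, f' (subCloud m r P j) = f (subCloud m r P j) := by
    intro j
    rw [hf']
    simp only [if_neg (hnotD j)]
  -- label frequencies of f' on P agree with those of f
  have hfreqP : ∀ l, labelFreq m r f' P l = labelFreq m r f P l := by
    intro l
    rw [hLF f' P hne', hLF f P hne']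
    congr 1
    apply Finset.filter_congr
    intro i _
    rw [hf'eq i]
  -- sub-clouds of P'
  have hsub' : ∀ i, subCloud m r P' i =
      if i ∈ T then subCloud m r P i \ {x i} else subCloud m r P i := by
    intro i
    ext e
    simp only [subCloud, hP', Finset.mem_filter, Finset.mem_sdiff, Finset.mem_image]
    by_cases hiT : i ∈ T
    · simp only [if_pos hiT, Finset.mem_sdiff, Finset.mem_filter, Finset.mem_singleton]
      constructor
      · rintro ⟨⟨heP, hnim⟩, hre⟩
        refine ⟨⟨heP, hre⟩, ?_⟩
        intro hexi
        exact hnim ⟨i, hiT, hexi.symm⟩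
      · rintro ⟨⟨heP, hre⟩, hnex⟩
        refine ⟨⟨heP, ?_⟩, hre⟩
        rintro ⟨j, hjT, rfl⟩
        have : j = i := by rw [← hxr j, hre]
        subst this
        exact hnex rfl
    · simp only [if_neg hiT, Finset.mem_filter]
      constructor
      · rintro ⟨⟨heP, _⟩, hre⟩
        exact ⟨heP, hre⟩
      · rintro ⟨heP, hre⟩
        refine ⟨⟨heP, ?_⟩, hre⟩
        rintro ⟨j, hjT, rfl⟩
        rw [hxr j] at hre
        exact hiT (hre ▸ hjT)
  -- sub-clouds of P' are nonempty
  have hne'' : ∀ i, (subCloud m r P' i).Nonempty := by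
    intro i
    rw [hsub' i]
    by_cases hiT : i ∈ T
    · rw [if_pos hiT]
      rw [← Finset.card_pos]
      have h2 := hne i
      have : ({x i} : Finset X).card = 1 := Finset.card_singleton _
      have hle := Finset.card_le_card (Finset.sdiff_subset (s := subCloud m r P i) (t := {x i}))
      have := Finset.card_sdiff_add_card_eq_card (Finset.inter_subset_left (s₁ := subCloud m r P i) (s₂ := {x i}))
      -- fallback: direct bound
      have hb : (subCloud m r P i).card ≤ (subCloud m r P i \ {x i}).card + 1 := by
        calc (subCloud m r P i).card ≤ ((subCloud m r P i \ {x i}) ∪ {x i}).card := by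
              apply Finset.card_le_card
              intro e he
              by_cases hex : e = x i
              · subst hex; simp
              · simp [he, hex]
          _ ≤ (subCloud m r P i \ {x i}).card + 1 := by
              have := Finset.card_union_le (subCloud m r P i \ {x i}) ({x i} : Finset X)
              simpa using this
      omega
    · rw [if_neg hiT]; exact hne' i
  -- classification of perturbed sub-clouds
  have hf'P' : ∀ i, f' (subCloud m r P' i) =
      if i ∈ T then y' else f (subCloud m r P i) := by
    intro i
    rw [hsub' i]
    by_cases hiT : i ∈ T
    · rw [if_pos hiT, if_pos hiT, hf']
      exact if_pos (Finset.mem_image.mpr ⟨i, hiT, rfl⟩)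
    · rw [if_neg hiT, if_neg hiT]
      exact hf'eq i
  -- frequency of y on P'
  have hTSy : ∀ i ∈ T, f (subCloud m r P i) = y := by
    intro i hi
    exact (Finset.mem_filter.mp (hTsub hi)).2
  have hfreqy : labelFreq m r f' P' y = labelFreq m r f P y - k := by
    have hfilter : (Finset.univ.filter (fun i : Fin m => f' (subCloud m r P' i) = y))
        = Sy \ T := by
      ext i
      simp only [Finset.mem_filter, Finset.mem_univ, true_and, Finset.mem_sdiff, hf'P' i, hSy]
      by_cases hiT : i ∈ T
      · simp [hiT, hy'ne]
      · simp [hiT]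
    rw [hLF f' P' hne'', hfilter, Finset.card_sdiff_of_subset hTsub, hSycard, hTcard]
  -- frequency of y' on P'
  have hfreqy' : labelFreq m r f' P' y' = labelFreq m r f P y' + k := by
    rw [hLF f' P' hne'', hLF f P hne', ← hTcard]
    have hsplit : (Finset.univ.filter (fun i : Fin m =>
        (if i ∈ T then y' else f (subCloud m r P i)) = y')) =
        (Finset.univ.filter (fun i : Fin m => f (subCloud m r P i) = y')) ∪ T := by
      ext i
      simp only [Finset.mem_filter, Finset.mem_univ, true_and, Finset.mem_union]
      by_cases hiT : i ∈ T
      · simp [hiT]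
      · simp [hiT]
    have hdisj : Disjoint (Finset.univ.filter (fun i : Fin m =>
        f (subCloud m r P i) = y')) T := by
      rw [Finset.disjoint_left]
      intro i hi hiT
      have := hTSy i hiT
      have h2 := (Finset.mem_filter.mp hi).2
      exact hy'ne (h2 ▸ this ▸ rfl)
    have : ∀ i, f' (subCloud m r P' i) = (if i ∈ T then y' else f (subCloud m r P i)) := hf'P'
    calc (Finset.univ.filter (fun i : Fin m => f' (subCloud m r P' i) = y')).card
        = (Finset.univ.filter (fun i : Fin m =>
            (if i ∈ T then y' else f (subCloud m r P i)) = y')).card := by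
          congr 1; apply Finset.filter_congr; intro i _; rw [hf'P' i]
      _ = (Finset.univ.filter (fun i : Fin m => f (subCloud m r P i) = y')).card + T.card := by
          rw [hsplit, Finset.card_union_of_disjoint hdisj]
  -- conclude
  refine ⟨f', P', hfreqP, hsubP', hcardPP', ?_⟩
  have hensP : ensemble m r f' P = y := by
    rw [ensemble_congr m r f' f P P hfreqP]; exact hy
  rw [hensP]
  intro hcon
  -- y is a maximizer for f' on P'
  have hymem' : y ∈ Finset.univ.filter
      (fun l : Fin c => ∀ l', labelFreq m r f' P' l' ≤ labelFreq m r f' P' l) := by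
    rw [← hcon]
    exact Finset.min'_mem _ _
  have hymax' : ∀ l', labelFreq m r f' P' l' ≤ labelFreq m r f' P' y :=
    (Finset.mem_filter.mp hymem').2
  have h1 := hymax' y'
  rw [hfreqy, hfreqy'] at h1
  by_cases hlt : y' < y
  · -- then equality of frequencies and y' < y contradicts minimality
    rw [if_pos hlt] at hkey
    have heq : labelFreq m r f' P' y' = labelFreq m r f' P' y := by
      rw [hfreqy, hfreqy']; omega
    have hy'max : ∀ l', labelFreq m r f' P' l' ≤ labelFreq m r f' P' y' := by
      intro l'
      rw [heq]; exact hymax' l'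
    have hy'memf : y' ∈ Finset.univ.filter
        (fun l : Fin c => ∀ l', labelFreq m r f' P' l' ≤ labelFreq m r f' P' l) :=
      Finset.mem_filter.mpr ⟨Finset.mem_univ _, hy'max⟩
    unfold ensemble at hcon
    have hle : y ≤ y' := by
      rw [← hcon]
      exact Finset.min'_le _ y' hy'memf
    exact absurd hlt (not_lt.mpr hle)
  · rw [if_neg hlt] at hkey
    omega
end

section
/- (ℓ2 certified radius implies ℓ0 certified perturbation size for point modification attacks.) Let g be a function from (ℝ^o)^n to labels, let γ > 0 and η > 0 be reals, and let x ∈ (ℝ^o)^n be such that g(x') = g(x) for every x' ∈ (ℝ^o)^n with ‖x' − x‖₂ ≤ γ (where ‖·‖₂ is the Euclidean norm of the concatenation). Then for every x' ∈ (ℝ^o)^n that differs from x in at most ⌊γ²/η²⌋ of the n component vectors and satisfies ‖x_i − x'_i‖₂ ≤ η for every i, we have g(x') = g(x). -/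
open scoped Classical

/-- an `ℓ2` certified radius `γ` implies an `ℓ0` certified perturbation size
`⌊γ²/η²⌋` against point modification attacks, when all points lie in a region of
`ℓ2`-diameter at most `η`. -/
theorem l2_radius_implies_l0_certification {L : Type*} (n o : ℕ) (hn : 1 ≤ n) (ho : 1 ≤ o)
    (g : PiLp 2 (fun _ : Fin n => EuclideanSpace ℝ (Fin o)) → L)
    (γ η : ℝ) (hγ : 0 < γ) (hη : 0 < η)
    (x : PiLp 2 (fun _ : Fin n => EuclideanSpace ℝ (Fin o)))
    (hrad : ∀ x' : PiLp 2 (fun _ : Fin n => EuclideanSpace ℝ (Fin o)),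
      ‖x' - x‖ ≤ γ → g x' = g x) :
    ∀ x' : PiLp 2 (fun _ : Fin n => EuclideanSpace ℝ (Fin o)),
      (Finset.univ.filter (fun i : Fin n => x i ≠ x' i)).card ≤ Nat.floor (γ ^ 2 / η ^ 2) →
      (∀ i : Fin n, ‖x i - x' i‖ ≤ η) → g x' = g x := by
  intro x' hcard hpt
  apply hrad
  have hsq : ‖x' - x‖ ^ 2 = ∑ i, ‖(x' - x) i‖ ^ 2 := PiLp.norm_sq_eq_of_L2 _ _
  set S := Finset.univ.filter (fun i : Fin n => x i ≠ x' i) with hS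
  have hsum : ∑ i, ‖(x' - x) i‖ ^ 2 = ∑ i ∈ S, ‖(x' - x) i‖ ^ 2 := by
    rw [← Finset.sum_filter_add_sum_filter_not Finset.univ (fun i => x i ≠ x' i)]
    have : ∑ i ∈ Finset.univ.filter (fun i => ¬ x i ≠ x' i), ‖(x' - x) i‖ ^ 2 = 0 := by
      apply Finset.sum_eq_zero
      intro i hi
      simp only [Finset.mem_filter, not_not] at hi
      simp [PiLp.sub_apply, hi.2]
    rw [this, add_zero]
  have hbound : ∑ i ∈ S, ‖(x' - x) i‖ ^ 2 ≤ S.card * η ^ 2 := by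
    calc ∑ i ∈ S, ‖(x' - x) i‖ ^ 2 ≤ ∑ _i ∈ S, η ^ 2 := by
          apply Finset.sum_le_sum
          intro i _
          have := hpt i
          have hx : ‖(x' - x) i‖ = ‖x i - x' i‖ := by
            rw [PiLp.sub_apply, ← norm_neg, neg_sub]
          rw [hx]
          exact pow_le_pow_left₀ (norm_nonneg _) this 2
      _ = S.card * η ^ 2 := by rw [Finset.sum_const, nsmul_eq_mul]
  have hfloor : (S.card : ℝ) * η ^ 2 ≤ γ ^ 2 := by
    have h1 : (S.card : ℝ) ≤ Nat.floor (γ ^ 2 / η ^ 2) := by exact_mod_cast hcard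
    have h2 : (Nat.floor (γ ^ 2 / η ^ 2) : ℝ) ≤ γ ^ 2 / η ^ 2 :=
      Nat.floor_le (by positivity)
    have hη2 : (0:ℝ) < η ^ 2 := by positivity
    calc (S.card : ℝ) * η ^ 2 ≤ (γ ^ 2 / η ^ 2) * η ^ 2 := by
          apply mul_le_mul_of_nonneg_right (h1.trans h2) hη2.le
      _ = γ ^ 2 := by field_simp
  have : ‖x' - x‖ ^ 2 ≤ γ ^ 2 := by rw [hsq, hsum]; exact hbound.trans hfloor
  nlinarith [norm_nonneg (x' - x), hγ.le]
end
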